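/- For arbitrary u, v ∈ Dom(L) the limits [u,v](−∞) := lim_{t→−∞}[u,v](t) and [u,v](∞) := lim_{t→∞}[u,v](t) exist and are finite. -/

import Mathlib

open MeasureTheory Complex Filter Set

noncomputable section

/-- The complex Hilbert space `L²(ℝ)`. -/
abbrev Hsp : Type := Lp ℂ 2 (volume : Measure ℝ)

/-- `u` is locally absolutely continuous on `ℝ` with a.e. derivative `g`
(i.e. `u` is the indefinite integral of the locally integrable function `g`). -/
def HasLocDeriv (u g : ℝ → ℂ) : Prop :=
  LocallyIntegrable g volume ∧ ∀ x : ℝ, u x = u 0 + ∫ t in (0:ℝ)..x, g t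

lemma HasLocDeriv.intervalIntegrable {u g : ℝ → ℂ} (h : HasLocDeriv u g) (a b : ℝ) :
    IntervalIntegrable g volume a b :=
  (h.1.integrableOn_isCompact isCompact_uIcc).intervalIntegrable

lemma HasLocDeriv.congr_fun {u v g : ℝ → ℂ} (h : HasLocDeriv u g) (huv : ∀ x, v x = u x) :
    HasLocDeriv v g :=
  ⟨h.1, fun x => by rw [huv x, huv 0]; exact h.2 x⟩

lemma HasLocDeriv.zero : HasLocDeriv (0 : ℝ → ℂ) 0 := by
  refine ⟨locallyIntegrable_const (0 : ℂ), fun x => by simp⟩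

lemma HasLocDeriv.add {u g v h' : ℝ → ℂ} (hu : HasLocDeriv u g) (hv : HasLocDeriv v h') :
    HasLocDeriv (fun x => u x + v x) (fun x => g x + h' x) := by
  refine ⟨hu.1.add hv.1, fun x => ?_⟩
  show u x + v x = u 0 + v 0 + ∫ t in (0:ℝ)..x, (g t + h' t)
  rw [intervalIntegral.integral_add (hu.intervalIntegrable 0 x) (hv.intervalIntegrable 0 x),
    hu.2 x, hv.2 x]
  ring

lemma HasLocDeriv.const_mul {u g : ℝ → ℂ} (c : ℂ) (hu : HasLocDeriv u g) :
    HasLocDeriv (fun x => c * u x) (fun x => c * g x) := by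
  have hli : LocallyIntegrable (fun x => c * g x) volume := hu.1.smul c
  refine ⟨hli, fun x => ?_⟩
  have h : ∫ t in (0:ℝ)..x, c * g t = c * ∫ t in (0:ℝ)..x, g t := by
    simpa [smul_eq_mul] using intervalIntegral.integral_smul c g (a := (0:ℝ)) (b := x) (μ := volume)
  show c * u x = c * u 0 + ∫ t in (0:ℝ)..x, c * g t
  rw [h, hu.2 x]
  ring

/-- The first quasi-derivative `u^{[1]} = p u' - (Q + i r) u`. -/
def qd1 (p Q r : ℝ → ℝ) (u u' : ℝ → ℂ) : ℝ → ℂ :=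
  fun x => (p x : ℂ) * u' x - ((Q x : ℂ) + Complex.I * (r x : ℂ)) * u x

/-- `u` belongs (locally) to the domain of the quasi-differential expression:
`u` is locally absolutely continuous with derivative `u'` and the first quasi-derivative
`u^{[1]} = p u' - (Q + i r) u` is locally absolutely continuous with derivative `w`. -/
def QDom (p Q s r : ℝ → ℝ) (u u' w : ℝ → ℂ) : Prop :=
  HasLocDeriv u u' ∧ HasLocDeriv (qd1 p Q r u u') w

/-- The quasi-differential expression `l[u] = -u^{[2]}` where
`u^{[2]} = (u^{[1]})' + ((Q - i r)/p) u^{[1]} + ((Q² + r²)/p - s) u`. -/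
def lExpr (p Q s r : ℝ → ℝ) (u u' w : ℝ → ℂ) : ℝ → ℂ := fun x =>
  -(w x + (((Q x : ℂ) - Complex.I * (r x : ℂ)) / (p x : ℂ)) * qd1 p Q r u u' x
    + ((((Q x) ^ 2 + (r x) ^ 2 : ℝ) : ℂ) / (p x : ℂ) - (s x : ℂ)) * u x)

/-- The standing minimal regularity assumptions on the real-valued coefficients:
`1/√|p|, Q/√|p|, r/√|p| ∈ L²_loc(ℝ)`, `s ∈ L¹_loc(ℝ)` and `1/p ≠ 0` a.e. -/
structure Coeffs (p Q s r : ℝ → ℝ) : Prop where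
  meas_p : Measurable p
  meas_Q : Measurable Q
  meas_s : Measurable s
  meas_r : Measurable r
  hp : LocallyIntegrable (fun x => 1 / |p x|) volume
  hQ : LocallyIntegrable (fun x => (Q x) ^ 2 / |p x|) volume
  hr : LocallyIntegrable (fun x => (r x) ^ 2 / |p x|) volume
  hs : LocallyIntegrable s volume
  hp0 : ∀ᵐ x ∂(volume : Measure ℝ), p x ≠ 0

lemma qd1_add_eq (p Q r : ℝ → ℝ) (u₁ u₁' u₂ u₂' : ℝ → ℂ) (x : ℝ) :
    qd1 p Q r (fun y => u₁ y + u₂ y) (fun y => u₁' y + u₂' y) x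
      = qd1 p Q r u₁ u₁' x + qd1 p Q r u₂ u₂' x := by
  simp only [qd1]; ring

lemma qd1_smul_eq (p Q r : ℝ → ℝ) (c : ℂ) (u u' : ℝ → ℂ) (x : ℝ) :
    qd1 p Q r (fun y => c * u y) (fun y => c * u' y) x = c * qd1 p Q r u u' x := by
  simp only [qd1]; ring

lemma QDom.zero (p Q s r : ℝ → ℝ) : QDom p Q s r 0 0 0 := by
  refine ⟨HasLocDeriv.zero, HasLocDeriv.zero.congr_fun fun x => ?_⟩
  simp [qd1]

lemma QDom.add {p Q s r : ℝ → ℝ} {u₁ u₁' w₁ u₂ u₂' w₂ : ℝ → ℂ}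
    (h₁ : QDom p Q s r u₁ u₁' w₁) (h₂ : QDom p Q s r u₂ u₂' w₂) :
    QDom p Q s r (fun x => u₁ x + u₂ x) (fun x => u₁' x + u₂' x) (fun x => w₁ x + w₂ x) :=
  ⟨h₁.1.add h₂.1, (h₁.2.add h₂.2).congr_fun (qd1_add_eq p Q r u₁ u₁' u₂ u₂')⟩

lemma QDom.smul {p Q s r : ℝ → ℝ} {u u' w : ℝ → ℂ} (c : ℂ) (h : QDom p Q s r u u' w) :
    QDom p Q s r (fun x => c * u x) (fun x => c * u' x) (fun x => c * w x) :=
  ⟨h.1.const_mul c, (h.2.const_mul c).congr_fun (qd1_smul_eq p Q r c u u')⟩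

lemma lExpr_zero (p Q s r : ℝ → ℝ) (x : ℝ) : lExpr p Q s r 0 0 0 x = 0 := by
  simp [lExpr, qd1]

lemma lExpr_add (p Q s r : ℝ → ℝ) (u₁ u₁' w₁ u₂ u₂' w₂ : ℝ → ℂ) (x : ℝ) :
    lExpr p Q s r (fun y => u₁ y + u₂ y) (fun y => u₁' y + u₂' y) (fun y => w₁ y + w₂ y) x
      = lExpr p Q s r u₁ u₁' w₁ x + lExpr p Q s r u₂ u₂' w₂ x := by
  simp only [lExpr, qd1]; ring

lemma lExpr_smul (p Q s r : ℝ → ℝ) (c : ℂ) (u u' w : ℝ → ℂ) (x : ℝ) :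
    lExpr p Q s r (fun y => c * u y) (fun y => c * u' y) (fun y => c * w y) x
      = c * lExpr p Q s r u u' w x := by
  simp only [lExpr, qd1]; ring

/-- The graph of the maximal operator `L` in `L²(ℝ) × L²(ℝ)`. -/
def maxGraph (p Q s r : ℝ → ℝ) : Submodule ℂ (Hsp × Hsp) where
  carrier := {fg | ∃ u u' w, QDom p Q s r u u' w ∧ (⇑fg.1 =ᵐ[volume] u) ∧
    (⇑fg.2 =ᵐ[volume] lExpr p Q s r u u' w)}
  zero_mem' := by
    refine ⟨0, 0, 0, QDom.zero p Q s r, ?_, ?_⟩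
    · filter_upwards [Lp.coeFn_zero ℂ 2 (volume : Measure ℝ)] with x hx using hx
    · filter_upwards [Lp.coeFn_zero ℂ 2 (volume : Measure ℝ)] with x hx
      rw [lExpr_zero]; exact hx
  add_mem' := by
    rintro ⟨f₁, g₁⟩ ⟨f₂, g₂⟩ ⟨u₁, u₁', w₁, hq₁, hf₁, hg₁⟩ ⟨u₂, u₂', w₂, hq₂, hf₂, hg₂⟩
    refine ⟨fun x => u₁ x + u₂ x, fun x => u₁' x + u₂' x, fun x => w₁ x + w₂ x,
      hq₁.add hq₂, ?_, ?_⟩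
    · filter_upwards [Lp.coeFn_add f₁ f₂, hf₁, hf₂] with x h1 h2 h3
      show (⇑(f₁ + f₂)) x = _
      rw [h1]; simp [h2, h3]
    · filter_upwards [Lp.coeFn_add g₁ g₂, hg₁, hg₂] with x h1 h2 h3
      show (⇑(g₁ + g₂)) x = _
      rw [h1, lExpr_add]; simp [h2, h3]
  smul_mem' := by
    rintro c ⟨f, g⟩ ⟨u, u', w, hq, hf, hg⟩
    refine ⟨fun x => c * u x, fun x => c * u' x, fun x => c * w x, hq.smul c, ?_, ?_⟩
    · filter_upwards [Lp.coeFn_smul c f, hf] with x h1 h2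
      show (⇑(c • f)) x = _
      rw [h1]; simp [h2]
    · filter_upwards [Lp.coeFn_smul c g, hg] with x h1 h2
      show (⇑(c • g)) x = _
      rw [h1, lExpr_smul]; simp [h2]

/-- The graph of the preminimal operator `L₀₀` (compactly supported members of the graph
of the maximal operator). -/
def preminGraph (p Q s r : ℝ → ℝ) : Submodule ℂ (Hsp × Hsp) where
  carrier := {fg | ∃ u u' w, QDom p Q s r u u' w ∧ HasCompactSupport u ∧
    (⇑fg.1 =ᵐ[volume] u) ∧ (⇑fg.2 =ᵐ[volume] lExpr p Q s r u u' w)}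
  zero_mem' := by
    refine ⟨0, 0, 0, QDom.zero p Q s r, by simpa using HasCompactSupport.zero, ?_, ?_⟩
    · filter_upwards [Lp.coeFn_zero ℂ 2 (volume : Measure ℝ)] with x hx using hx
    · filter_upwards [Lp.coeFn_zero ℂ 2 (volume : Measure ℝ)] with x hx
      rw [lExpr_zero]; exact hx
  add_mem' := by
    rintro ⟨f₁, g₁⟩ ⟨f₂, g₂⟩ ⟨u₁, u₁', w₁, hq₁, hc₁, hf₁, hg₁⟩ ⟨u₂, u₂', w₂, hq₂, hc₂, hf₂, hg₂⟩
    refine ⟨fun x => u₁ x + u₂ x, fun x => u₁' x + u₂' x, fun x => w₁ x + w₂ x,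
      hq₁.add hq₂, hc₁.add hc₂, ?_, ?_⟩
    · filter_upwards [Lp.coeFn_add f₁ f₂, hf₁, hf₂] with x h1 h2 h3
      show (⇑(f₁ + f₂)) x = _
      rw [h1]; simp [h2, h3]
    · filter_upwards [Lp.coeFn_add g₁ g₂, hg₁, hg₂] with x h1 h2 h3
      show (⇑(g₁ + g₂)) x = _
      rw [h1, lExpr_add]; simp [h2, h3]
  smul_mem' := by
    rintro c ⟨f, g⟩ ⟨u, u', w, hq, hc, hf, hg⟩
    refine ⟨fun x => c * u x, fun x => c * u' x, fun x => c * w x, hq.smul c,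
      hc.mono ?_, ?_, ?_⟩
    · intro x hx
      simp only [Function.mem_support, ne_eq] at hx ⊢
      exact fun h => hx (by rw [h, mul_zero])
    · filter_upwards [Lp.coeFn_smul c f, hf] with x h1 h2
      show (⇑(c • f)) x = _
      rw [h1]; simp [h2]
    · filter_upwards [Lp.coeFn_smul c g, hg] with x h1 h2
      show (⇑(c • g)) x = _
      rw [h1, lExpr_smul]; simp [h2]

/-- The maximal operator `L`, an unbounded operator in `L²(ℝ)`. -/
def maxOp (p Q s r : ℝ → ℝ) : Hsp →ₗ.[ℂ] Hsp := (maxGraph p Q s r).toLinearPMap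

/-- The preminimal operator `L₀₀`, the restriction of `L` to compactly supported functions. -/
def preminOp (p Q s r : ℝ → ℝ) : Hsp →ₗ.[ℂ] Hsp := (preminGraph p Q s r).toLinearPMap

/-- The minimal operator `L₀`, the closure of `L₀₀`. -/
def minOp (p Q s r : ℝ → ℝ) : Hsp →ₗ.[ℂ] Hsp := (preminOp p Q s r).closure

/-- The boundary bilinear form `[u,v](t) = u(t)·conj(v^{[1]}(t)) − u^{[1]}(t)·conj(v(t))`. -/
def brkt (p Q r : ℝ → ℝ) (u u' v v' : ℝ → ℂ) (t : ℝ) : ℂ :=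
  u t * (starRingEnd ℂ) (qd1 p Q r v v' t) - qd1 p Q r u u' t * (starRingEnd ℂ) (v t)

/-- `u, u', w` is a concrete representative of `f` as a member of `Dom(L)`:
`u` is a representative of the `L²`-class `f`, `u` and `u^{[1]}` are locally absolutely
continuous (with derivatives `u'` and `w` respectively) and `l[u] ∈ L²(ℝ)`. -/
def IsMaxRep (p Q s r : ℝ → ℝ) (f : Hsp) (u u' w : ℝ → ℂ) : Prop :=
  QDom p Q s r u u' w ∧ (⇑f =ᵐ[volume] u) ∧ MemLp (lExpr p Q s r u u' w) 2 volume

/-- Function-level membership in the domain of the preminimal operator `L₀₀`: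
`v` and `v^{[1]}` are locally absolutely continuous, `v, l[v] ∈ L²(ℝ)` and `v` has
compact support. -/
def MemPremin (p Q s r : ℝ → ℝ) (v : ℝ → ℂ) : Prop :=
  ∃ v' w : ℝ → ℂ, QDom p Q s r v v' w ∧ MemLp v 2 volume ∧
    MemLp (lExpr p Q s r v v' w) 2 volume ∧ HasCompactSupport v

/-- `p ∈ W¹_{2,loc}(ℝ)` (for a real-valued function), with weak derivative `p' ∈ L²_loc`. -/
def W12locR (p p' : ℝ → ℝ) : Prop :=
  LocallyIntegrable p' volume ∧ LocallyIntegrable (fun x => (p' x) ^ 2) volume ∧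
  ∀ x : ℝ, p x = p 0 + ∫ t in (0:ℝ)..x, p' t

/-- `φ ∈ W²₂(ℝ)` with compact support: `φ, φ', φ'' ∈ L²(ℝ)` where `φ'` and `φ''` are the
first and second weak derivatives of `φ`, and `supp φ` is compact. -/
def W22cs (φ φ' φ'' : ℝ → ℝ) : Prop :=
  LocallyIntegrable φ' volume ∧ LocallyIntegrable φ'' volume ∧
  MemLp φ 2 volume ∧ MemLp φ' 2 volume ∧ MemLp φ'' 2 volume ∧
  (∀ x : ℝ, φ x = φ 0 + ∫ t in (0:ℝ)..x, φ' t) ∧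
  (∀ x : ℝ, φ' x = φ' 0 + ∫ t in (0:ℝ)..x, φ'' t) ∧
  HasCompactSupport φ

/-- `p ∈ W¹₂([α,β]) = H¹([α,β])` with weak derivative `p'` on the interval `[α,β]`. -/
def W12OnIcc (p p' : ℝ → ℝ) (α β : ℝ) : Prop :=
  IntegrableOn p' (Set.Icc α β) volume ∧ MemLp p' 2 (volume.restrict (Set.Icc α β)) ∧
  ∀ x ∈ Set.Icc α β, p x = p α + ∫ t in α..x, p' t

/-
The bracket is locally absolutely continuous, and the quasi-derivative structure of `l` is
designed so that its derivative is the Lagrange identity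
`[u,v]' = l[u] · conj v - u · conj (l[v])` a.e. (the terms carrying `Q`, `r`, `s` and `1/p`
cancel). For `u, v, l[u], l[v] ∈ L²` the right-hand side is integrable over `ℝ`, so
`[u,v](t) = [u,v](0) + ∫₀ᵗ (l[u] conj v - u conj l[v])` has limits at `±∞`.
-/

open intervalIntegral Topology

lemma integral_mul_primitive_eq_integral_primitive_mul {g h : ℝ → ℂ} {a b : ℝ} (hab : a ≤ b)
    (hg : IntegrableOn g (Ioc a b)) (hh : IntegrableOn h (Ioc a b)) :
    ∫ t in a..b, g t * ∫ τ in a..t, h τ = ∫ τ in a..b, (∫ t in τ..b, g t) * h τ := by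
  set μ : Measure ℝ := volume.restrict (Ioc a b) with hμ
  set F : ℝ × ℝ → ℂ := indicator {z | z.2 ≤ z.1} fun z => g z.1 * h z.2 with hF
  have hFi : Integrable F (μ.prod μ) :=
    (hg.mul_prod hh).indicator (measurableSet_le measurable_snd measurable_fst)
  have inner_fst : ∀ t ∈ Ioc a b, ∫ τ, F (t, τ) ∂μ = g t * ∫ τ in a..t, h τ := by
    intro t ht
    have hslice : (fun τ => F (t, τ)) = indicator (Iic t) fun τ => g t * h τ := by
      ext τ; simp only [hF, indicator_apply, mem_ofPred_eq, mem_Iic]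
    have hset : Iic t ∩ Ioc a b = Ioc a t := by
      ext y; simp only [mem_inter_iff, mem_Iic, mem_Ioc]
      exact ⟨fun ⟨h1, h2, _⟩ => ⟨h2, h1⟩, fun ⟨h1, h2⟩ => ⟨h2, h1, h2.trans ht.2⟩⟩
    rw [hslice, MeasureTheory.integral_indicator measurableSet_Iic, hμ,
      Measure.restrict_restrict measurableSet_Iic, hset, integral_of_le ht.1.le,
      MeasureTheory.integral_const_mul]
  have inner_snd : ∀ τ ∈ Ioc a b, ∫ t, F (t, τ) ∂μ = (∫ t in τ..b, g t) * h τ := by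
    intro τ hτ
    have hslice : (fun t => F (t, τ)) = indicator (Ici τ) fun t => g t * h τ := by
      ext t; simp only [hF, indicator_apply, mem_ofPred_eq, mem_Ici]
    have hset : Ici τ ∩ Ioc a b = Icc τ b := by
      ext y; simp only [mem_inter_iff, mem_Ici, mem_Ioc, mem_Icc]
      exact ⟨fun ⟨h1, _, h3⟩ => ⟨h1, h3⟩, fun ⟨h1, h2⟩ => ⟨h1, hτ.1.trans_le h1, h2⟩⟩
    rw [hslice, MeasureTheory.integral_indicator measurableSet_Ici, hμ,
      Measure.restrict_restrict measurableSet_Ici, hset, integral_Icc_eq_integral_Ioc,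
      integral_of_le hτ.2, MeasureTheory.integral_mul_const]
  calc ∫ t in a..b, g t * ∫ τ in a..t, h τ
      = ∫ t, ∫ τ, F (t, τ) ∂μ ∂μ := by
        rw [integral_of_le hab]
        exact (setIntegral_congr_fun measurableSet_Ioc inner_fst).symm
    _ = ∫ τ, ∫ t, F (t, τ) ∂μ ∂μ := integral_integral_swap hFi
    _ = ∫ τ in a..b, (∫ t in τ..b, g t) * h τ := by
        rw [integral_of_le hab]
        exact setIntegral_congr_fun measurableSet_Ioc inner_snd

lemma integral_mul_primitive_add_primitive_mul {g h : ℝ → ℂ} {a b : ℝ} (hab : a ≤ b)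
    (hg : IntegrableOn g (Icc a b)) (hh : IntegrableOn h (Icc a b)) :
    ∫ t in a..b, ((g t * ∫ τ in a..t, h τ) + (∫ τ in a..t, g τ) * h t)
      = (∫ t in a..b, g t) * ∫ t in a..b, h t := by
  have hgu : IntegrableOn g (uIcc a b) := by rwa [uIcc_of_le hab]
  have hhu : IntegrableOn h (uIcc a b) := by rwa [uIcc_of_le hab]
  have hg' : IntervalIntegrable g volume a b := hgu.intervalIntegrable
  have hh' : IntervalIntegrable h volume a b := hhu.intervalIntegrable
  have hgH : IntervalIntegrable (fun t => g t * ∫ τ in a..t, h τ) volume a b :=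
    hg'.mul_continuousOn (continuousOn_primitive_interval hhu)
  have hGh : IntervalIntegrable (fun t => (∫ τ in a..t, g τ) * h t) volume a b :=
    hh'.continuousOn_mul (continuousOn_primitive_interval hgu)
  have hswap := integral_mul_primitive_eq_integral_primitive_mul hab
    (hg.mono_set Ioc_subset_Icc_self) (hh.mono_set Ioc_subset_Icc_self)
  have htail : ∀ τ ∈ uIcc a b,
      (∫ t in τ..b, g t) * h τ = (∫ t in a..b, g t) * h τ - (∫ t in a..τ, g t) * h τ := by
    intro τ hτ
    rw [← integral_interval_sub_left hg'
      (hgu.mono_set (uIcc_subset_uIcc_left hτ)).intervalIntegrable]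
    ring
  rw [integral_add hgH hGh, hswap, integral_congr htail,
    integral_sub (hh'.const_mul _) hGh, intervalIntegral.integral_const_mul]
  ring

namespace HasLocDeriv

variable {u g v h : ℝ → ℂ}

lemma sub_eq_integral (hu : HasLocDeriv u g) (a b : ℝ) : u b - u a = ∫ t in a..b, g t := by
  rw [hu.2 b, hu.2 a, ← integral_interval_sub_left (hu.intervalIntegrable 0 b)
    (hu.intervalIntegrable 0 a)]
  ring

lemma of_sub_eq_integral_of_le (hg : LocallyIntegrable g volume)
    (hu : ∀ a b, a ≤ b → u b - u a = ∫ t in a..b, g t) : HasLocDeriv u g := by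
  refine ⟨hg, fun x => ?_⟩
  rcases le_total 0 x with hx | hx
  · linear_combination hu 0 x hx
  · rw [integral_symm]
    linear_combination -hu x 0 hx

lemma continuous (hu : HasLocDeriv u g) : Continuous u :=
  (continuous_const.add (continuous_primitive hu.intervalIntegrable 0)).congr fun x => (hu.2 x).symm

lemma congr_ae (hu : HasLocDeriv u g) {g' : ℝ → ℂ} (hgg' : g =ᵐ[volume] g') : HasLocDeriv u g' :=
  ⟨hu.1.congr hgg', fun x => by
    rw [hu.2 x, integral_congr_ae (hgg'.mono fun t ht _ => ht)]⟩

lemma sub (hu : HasLocDeriv u g) (hv : HasLocDeriv v h) :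
    HasLocDeriv (fun x => u x - v x) (fun x => g x - h x) :=
  ⟨hu.1.sub hv.1, fun x => by
    show u x - v x = u 0 - v 0 + _
    rw [integral_sub (hu.intervalIntegrable 0 x) (hv.intervalIntegrable 0 x), hu.2 x, hv.2 x]
    ring⟩

lemma conj (hu : HasLocDeriv u g) :
    HasLocDeriv (fun x => starRingEnd ℂ (u x)) (fun x => starRingEnd ℂ (g x)) :=
  ⟨hu.1.mono (continuous_conj.comp_aestronglyMeasurable hu.1.aestronglyMeasurable)
      (ae_of_all _ fun x => by simp),
    fun x => by
      show starRingEnd ℂ (u x) = starRingEnd ℂ (u 0) + _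
      rw [intervalIntegral_conj, hu.2 x, map_add]⟩

lemma mul (hu : HasLocDeriv u g) (hv : HasLocDeriv v h) :
    HasLocDeriv (fun x => u x * v x) (fun x => g x * v x + u x * h x) := by
  refine of_sub_eq_integral_of_le
    ((hu.1.mul_continuous hv.continuous).add (hv.1.continuous_mul hu.continuous))
    fun a b hab => ?_
  have hu_eq : ∀ t, u t = u a + ∫ τ in a..t, g τ := fun t => by rw [← hu.sub_eq_integral]; ring
  have hv_eq : ∀ t, v t = v a + ∫ τ in a..t, h τ := fun t => by rw [← hv.sub_eq_integral]; ring
  have hg := hu.1.integrableOn_isCompact (isCompact_Icc (a := a) (b := b))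
  have hh := hv.1.integrableOn_isCompact (isCompact_Icc (a := a) (b := b))
  have hexpand : ∀ t, g t * v t + u t * h t = (g t * v a + u a * h t)
      + ((g t * ∫ τ in a..t, h τ) + (∫ τ in a..t, g τ) * h t) := fun t => by
    rw [hu_eq t, hv_eq t]; ring
  have hgv := (hu.intervalIntegrable a b).mul_const (v a)
  have huh := (hv.intervalIntegrable a b).const_mul (u a)
  have hprim : IntervalIntegrable
      (fun t => (g t * ∫ τ in a..t, h τ) + (∫ τ in a..t, g τ) * h t) volume a b :=
    ((hu.intervalIntegrable a b).mul_continuousOn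
        (continuous_primitive hv.intervalIntegrable a).continuousOn).add
      ((hv.intervalIntegrable a b).continuousOn_mul
        (continuous_primitive hu.intervalIntegrable a).continuousOn)
  rw [funext hexpand, intervalIntegral.integral_add (hgv.add huh) hprim,
    intervalIntegral.integral_add hgv huh, intervalIntegral.integral_mul_const,
    intervalIntegral.integral_const_mul, integral_mul_primitive_add_primitive_mul hab hg hh,
    hu_eq b, hv_eq b]
  ring

lemma exists_tendsto_atTop (hu : HasLocDeriv u g) {a : ℝ} (hg : IntegrableOn g (Ioi a)) :
    ∃ c, Tendsto u atTop (𝓝 c) :=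
  ⟨u a + ∫ t in Ioi a, g t, ((intervalIntegral_tendsto_integral_Ioi a hg tendsto_id).const_add
    (u a)).congr fun x => by rw [id, ← hu.sub_eq_integral]; ring⟩

lemma exists_tendsto_atBot (hu : HasLocDeriv u g) {b : ℝ} (hg : IntegrableOn g (Iic b)) :
    ∃ c, Tendsto u atBot (𝓝 c) :=
  ⟨u b - ∫ t in Iic b, g t, ((intervalIntegral_tendsto_integral_Iic b hg tendsto_id).const_sub
    (u b)).congr fun x => by rw [id, ← hu.sub_eq_integral]; ring⟩

end HasLocDeriv

section Lagrange

variable {p Q s r : ℝ → ℝ} {u u' w v v' wv : ℝ → ℂ}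

lemma lagrange_identity {x : ℝ} (hpx : p x ≠ 0) :
    (u' x * starRingEnd ℂ (qd1 p Q r v v' x) + u x * starRingEnd ℂ (wv x))
        - (w x * starRingEnd ℂ (v x) + qd1 p Q r u u' x * starRingEnd ℂ (v' x))
      = lExpr p Q s r u u' w x * starRingEnd ℂ (v x)
        - u x * starRingEnd ℂ (lExpr p Q s r v v' wv x) := by
  have hpx' : (p x : ℂ) ≠ 0 := by exact_mod_cast hpx
  simp only [lExpr, qd1, map_sub, map_add, map_mul, map_neg, map_div₀, conj_ofReal, conj_I]
  field_simp
  ring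

lemma hasLocDeriv_brkt (hp0 : ∀ᵐ x, p x ≠ 0) (hu : QDom p Q s r u u' w)
    (hv : QDom p Q s r v v' wv) :
    HasLocDeriv (brkt p Q r u u' v v') fun x => lExpr p Q s r u u' w x * starRingEnd ℂ (v x)
      - u x * starRingEnd ℂ (lExpr p Q s r v v' wv x) :=
  ((hu.1.mul hv.2.conj).sub (hu.2.mul hv.1.conj)).congr_ae
    (hp0.mono fun _ hpx => lagrange_identity hpx)

end Lagrange

/-- For arbitrary `u, v ∈ Dom(L)` the limits `[u,v](−∞)` and `[u,v](∞)`
exist and are finite. -/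
theorem brkt_limits_exist (p Q s r : ℝ → ℝ) (hc : Coeffs p Q s r)
    (u u' w v v' wv : ℝ → ℂ)
    (hqu : QDom p Q s r u u' w) (hu2 : MemLp u 2 volume)
    (hlu : MemLp (lExpr p Q s r u u' w) 2 volume)
    (hqv : QDom p Q s r v v' wv) (hv2 : MemLp v 2 volume)
    (hlv : MemLp (lExpr p Q s r v v' wv) 2 volume) :
    (∃ c : ℂ, Tendsto (brkt p Q r u u' v v') atTop (nhds c)) ∧
    (∃ c : ℂ, Tendsto (brkt p Q r u u' v v') atBot (nhds c)) := by
  have hbrkt := hasLocDeriv_brkt hc.hp0 hqu hqv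
  have hint : Integrable (fun x => lExpr p Q s r u u' w x * starRingEnd ℂ (v x)
      - u x * starRingEnd ℂ (lExpr p Q s r v v' wv x)) :=
    (hlu.integrable_mul hv2.star).sub (hu2.integrable_mul hlv.star)
  exact ⟨hbrkt.exists_tendsto_atTop (a := 0) hint.integrableOn,
    hbrkt.exists_tendsto_atBot (b := 0) hint.integrableOn⟩

end
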